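/- arXiv:2404.01595 — 4 statements merged into one kernel-verified Lean document; each statement's English description precedes it below -/
import Mathlib

section
/- For a discrete treatment t and random variable Z, the conditional mutual information I(t; Z | π(Z)) = 0, where π(Z) = (P(t = k | Z))_k is the propensity score. Equivalently, t is conditionally independent of Z given π(Z). -/
/-! The propensity score is a version of `P(t = k | Z)` that is already measurable for the
smaller σ-algebra `σ(π(Z))`, hence so is `P(t ∈ s | Z)` for every `s`. Whenever `E[1_A | σ(Z)]` is
`σ(π(Z))`-measurable, the tower property and pulling out the `σ(Z)`-measurable factor `1_B` give
`E[1_A 1_B | π(Z)] = E[1_A | π(Z)] E[1_B | π(Z)]` for every `B ∈ σ(Z)`. -/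

open MeasureTheory ProbabilityTheory

namespace ProbabilityTheory

variable {Ω : Type*} {m' m mΩ : MeasurableSpace Ω} {μ : Measure Ω} [IsFiniteMeasure μ]

lemma condExp_ae_eq_condExp_of_aestronglyMeasurable {E : Type*} [NormedAddCommGroup E]
    [NormedSpace ℝ E] [CompleteSpace E] {f : Ω → E} (hm'm : m' ≤ m) (hm : m ≤ mΩ)
    (hf : AEStronglyMeasurable[m'] (μ[f | m]) μ) : μ[f | m'] =ᵐ[μ] μ[f | m] :=
  (condExp_condExp_of_le hm'm hm).symm.trans
    (condExp_of_aestronglyMeasurable' (hm'm.trans hm) hf integrable_condExp)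

lemma condExp_inter_ae_eq_mul_of_aestronglyMeasurable (hm'm : m' ≤ m) (hm : m ≤ mΩ)
    {s u : Set Ω} (hs : MeasurableSet s) (hu : MeasurableSet[m] u)
    (hsm : AEStronglyMeasurable[m'] (μ⟦s | m⟧) μ) :
    μ⟦s ∩ u | m'⟧ =ᵐ[μ] μ⟦s | m'⟧ * μ⟦u | m'⟧ := by
  have hs_int : Integrable (s.indicator fun _ => (1 : ℝ)) μ := (integrable_const 1).indicator hs
  have hu_int : Integrable (u.indicator fun _ => (1 : ℝ)) μ :=
    (integrable_const 1).indicator (hm _ hu)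
  have h_mul : u.indicator (μ⟦s | m⟧) = μ⟦s | m⟧ * u.indicator fun _ => 1 := by
    ext ω
    by_cases hω : ω ∈ u <;> simp [hω]
  calc μ⟦s ∩ u | m'⟧ = μ[u.indicator (s.indicator fun _ => 1) | m'] := by
        rw [Set.indicator_indicator, Set.inter_comm]
    _ =ᵐ[μ] μ[μ[u.indicator (s.indicator fun _ => 1) | m] | m'] :=
        (condExp_condExp_of_le hm'm hm).symm
    _ =ᵐ[μ] μ[u.indicator (μ⟦s | m⟧) | m'] := condExp_congr_ae (condExp_indicator hs_int hu)
    _ =ᵐ[μ] μ⟦s | m⟧ * μ⟦u | m'⟧ := by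
        rw [h_mul]
        exact condExp_mul_of_aestronglyMeasurable_left hsm
          (h_mul ▸ integrable_condExp.indicator (hm _ hu)) hu_int
    _ =ᵐ[μ] μ⟦s | m'⟧ * μ⟦u | m'⟧ :=
        (condExp_ae_eq_condExp_of_aestronglyMeasurable hm'm hm hsm).symm.mul .rfl

lemma condIndep_of_aestronglyMeasurable_condExp [StandardBorelSpace Ω] {m₁ : MeasurableSpace Ω}
    (hm₁ : m₁ ≤ mΩ) (hm'm : m' ≤ m) (hm : m ≤ mΩ)
    (h : ∀ s, MeasurableSet[m₁] s → AEStronglyMeasurable[m'] (μ⟦s | m⟧) μ) :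
    CondIndep m' m₁ m (hm'm.trans hm) μ :=
  (condIndep_iff _ _ _ _ hm₁ hm μ).2 fun _ _ hs hu =>
    condExp_inter_ae_eq_mul_of_aestronglyMeasurable hm'm hm (hm₁ _ hs) hu (h _ hs)

lemma aestronglyMeasurable_condExp_preimage_of_forall_singleton {ι : Type*} [Fintype ι]
    [MeasurableSpace ι] [MeasurableSingletonClass ι] {t : Ω → ι} (ht : Measurable t)
    (h : ∀ k, AEStronglyMeasurable[m'] (μ⟦t ⁻¹' {k} | m⟧) μ) (s : Set ι) :
    AEStronglyMeasurable[m'] (μ⟦t ⁻¹' s | m⟧) μ := by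
  classical
  have h_sum : (t ⁻¹' s).indicator (fun _ => (1 : ℝ))
      = ∑ k ∈ Finset.univ.filter (· ∈ s), (t ⁻¹' {k}).indicator fun _ => (1 : ℝ) := by
    ext ω
    simp [Set.indicator_apply, Finset.sum_apply]
  have h_int (k : ι) : Integrable ((t ⁻¹' {k}).indicator fun _ => (1 : ℝ)) μ :=
    (integrable_const 1).indicator (ht (.singleton k))
  rw [h_sum]
  exact ⟨∑ k ∈ Finset.univ.filter (· ∈ s), (h k).mk,
    Finset.stronglyMeasurable_sum _ fun k _ => (h k).stronglyMeasurable_mk,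
    (condExp_finsetSum (fun k _ => h_int k) m).trans (eventuallyEq_sum fun k _ => (h k).ae_eq_mk)⟩

end ProbabilityTheory

theorem treatment_condIndep_given_propensity_general
    {Ω 𝒵 : Type*} [MeasurableSpace Ω] [StandardBorelSpace Ω]
    [MeasurableSpace 𝒵]
    (μ : Measure Ω) [IsProbabilityMeasure μ] {T : ℕ}
    (Z : Ω → 𝒵) (t : Ω → Fin (T + 1)) (π : 𝒵 → Fin (T + 1) → ℝ)
    (hZ : Measurable Z) (ht : Measurable t)
    (hπ : Measurable π)
    (hπ_version : ∀ k : Fin (T + 1),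
      (fun ω => π (Z ω) k)
        =ᵐ[μ]
      μ[(fun ω => if t ω = k then (1 : ℝ) else 0) | MeasurableSpace.comap Z inferInstance]) :
    CondIndepFun (MeasurableSpace.comap (fun ω => π (Z ω)) inferInstance)
      ((hπ.comp hZ).comap_le) t Z μ := by
  have h_le : MeasurableSpace.comap (fun ω => π (Z ω)) inferInstance
      ≤ MeasurableSpace.comap Z inferInstance :=
    (hπ.comp (comap_measurable Z)).comap_le
  have h_singleton (k : Fin (T + 1)) :
      AEStronglyMeasurable[MeasurableSpace.comap (fun ω => π (Z ω)) inferInstance]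
        (μ⟦t ⁻¹' {k} | MeasurableSpace.comap Z inferInstance⟧) μ := by
    have h_ind : (t ⁻¹' {k}).indicator (fun _ => (1 : ℝ)) = fun ω => if t ω = k then 1 else 0 := by
      ext ω
      by_cases h : t ω = k <;> simp [h]
    rw [h_ind]
    exact ((measurable_pi_apply k).comp (comap_measurable _)).aestronglyMeasurable.congr
      (hπ_version k)
  rw [condIndepFun_iff_condIndep]
  exact condIndep_of_aestronglyMeasurable_condExp ht.comap_le h_le hZ.comap_le
    fun _ ⟨s, _, hs⟩ =>
      hs ▸ aestronglyMeasurable_condExp_preimage_of_forall_singleton ht h_singleton s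

/-- `t` is conditionally independent of `Z` given the propensity score
`π(Z) = (P(t = k | Z))_k` (equivalently, `I(t; Z | π(Z)) = 0`). -/
theorem treatment_condIndep_given_propensity
    {Ω 𝒵 : Type*} [MeasurableSpace Ω] [StandardBorelSpace Ω] [Nonempty Ω]
    [MeasurableSpace 𝒵]
    (μ : Measure Ω) [IsProbabilityMeasure μ] {T : ℕ}
    (Z : Ω → 𝒵) (t : Ω → Fin (T + 1)) (π : 𝒵 → Fin (T + 1) → ℝ)
    (hZ : Measurable Z) (ht : Measurable t)
    (hπ : Measurable π)
    (hπ_version : ∀ k : Fin (T + 1),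
      (fun ω => π (Z ω) k)
        =ᵐ[μ]
      μ[(fun ω => if t ω = k then (1 : ℝ) else 0) | MeasurableSpace.comap Z inferInstance]) :
    CondIndepFun (MeasurableSpace.comap (fun ω => π (Z ω)) inferInstance)
      ((hπ.comp hZ).comap_le) t Z μ :=
  treatment_condIndep_given_propensity_general μ Z t π hZ ht hπ hπ_version
end

section
/- If b(Z) is any function of Z such that t is conditionally independent of Z given b(Z) (i.e., b is a balancing score), then the propensity score π(Z) = P(t | Z) is a measurable function of b(Z): there exists g with π(Z) = g(b(Z)) almost surely. -/
/-!
Since `σ(b(Z)) ≤ σ(Z)`, the conditional independence `t ⫫ Z | b(Z)` says that conditioning the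
events `{t = k}` on `Z` gives nothing beyond conditioning them on `b(Z)`: `P(t = k | Z)` and
`P(t = k | b(Z))` agree almost surely. The latter is read off the regular conditional
distribution of `t` given `b(Z)`, a measurable function of `b(Z)`.
-/

open MeasureTheory ProbabilityTheory

theorem condExp_indicator_ae_eq_of_condIndep {Ω : Type*} {m m₁ m₂ mΩ : MeasurableSpace Ω}
    [StandardBorelSpace Ω] {μ : Measure Ω} [IsFiniteMeasure μ]
    (hm : m ≤ m₂) (hm₂ : m₂ ≤ mΩ) (hm₁ : m₁ ≤ mΩ) (hind : CondIndep m m₁ m₂ (hm.trans hm₂) μ)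
    {A : Set Ω} (hA : MeasurableSet[m₁] A) :
    μ⟦A | m⟧ =ᵐ[μ] μ⟦A | m₂⟧ := by
  have hm₀ : m ≤ mΩ := hm.trans hm₂
  have hA₀ : MeasurableSet A := hm₁ _ hA
  refine ae_eq_condExp_of_forall_setIntegral_eq hm₂
    ((integrable_const (μ := μ) (1 : ℝ)).indicator hA₀)
    (fun _ _ _ => integrable_condExp.integrableOn) (fun B hB _ => ?_)
    (stronglyMeasurable_condExp.mono hm).aestronglyMeasurable
  have hB₀ : MeasurableSet B := hm₂ _ hB
  have h_mul : μ⟦A | m⟧ * B.indicator (fun _ => (1 : ℝ)) = B.indicator (μ⟦A | m⟧) := by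
    ext ω
    by_cases hω : ω ∈ B <;> simp [hω]
  calc ∫ ω in B, (μ⟦A | m⟧) ω ∂μ
      = ∫ ω, (μ⟦A | m⟧ * B.indicator (fun _ => (1 : ℝ))) ω ∂μ := by
        rw [h_mul, integral_indicator hB₀]
    _ = ∫ ω, (μ⟦A | m⟧ * μ⟦B | m⟧) ω ∂μ := by
        rw [← integral_condExp hm₀]
        refine integral_congr_ae
          (condExp_mul_of_stronglyMeasurable_left stronglyMeasurable_condExp ?_ ?_)
        · exact h_mul ▸ integrable_condExp.indicator hB₀
        · exact (integrable_const 1).indicator hB₀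
    _ = ∫ ω, (μ⟦A ∩ B | m⟧) ω ∂μ :=
        integral_congr_ae ((condIndep_iff m m₁ m₂ hm₀ hm₁ hm₂ μ).mp hind A B hA hB).symm
    _ = ∫ ω in B, A.indicator (fun _ => (1 : ℝ)) ω ∂μ := by
        rw [integral_condExp hm₀, ← integral_indicator hB₀, Set.indicator_indicator,
          Set.inter_comm]

theorem propensity_factors_through_balancing_score_general
    {Ω 𝒵 ℬ : Type*} [MeasurableSpace Ω] [StandardBorelSpace Ω]
    [MeasurableSpace 𝒵] [MeasurableSpace ℬ]
    (μ : Measure Ω) [IsProbabilityMeasure μ] {T : ℕ}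
    (Z : Ω → 𝒵) (t : Ω → Fin (T + 1)) (π : 𝒵 → Fin (T + 1) → ℝ) (b : 𝒵 → ℬ)
    (hZ : Measurable Z) (ht : Measurable t) (hb : Measurable b)
    (hπ_version : ∀ k : Fin (T + 1),
      (fun ω => π (Z ω) k)
        =ᵐ[μ]
      μ[(fun ω => if t ω = k then (1 : ℝ) else 0) | MeasurableSpace.comap Z inferInstance])
    (hbal : CondIndepFun (MeasurableSpace.comap (fun ω => b (Z ω)) inferInstance)
      ((hb.comp hZ).comap_le) t Z μ) :
    ∃ g : ℬ → Fin (T + 1) → ℝ, Measurable g ∧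
      (fun ω => π (Z ω)) =ᵐ[μ] fun ω => g (b (Z ω)) := by
  refine ⟨fun x k => (condDistrib t (b ∘ Z) μ x).real {k},
    measurable_pi_lambda _ fun k => Kernel.measurable_coe _ (measurableSet_singleton k)
      |>.ennreal_toReal, ?_⟩
  have h_comap :
      MeasurableSpace.comap (b ∘ Z) inferInstance ≤ MeasurableSpace.comap Z inferInstance :=
    (hb.comp (comap_measurable Z)).comap_le
  have h_condIndep := (condIndepFun_iff_condIndep _ _ _ _ _).mp hbal
  have h_coord : ∀ k : Fin (T + 1),
      (fun ω => π (Z ω) k) =ᵐ[μ] fun ω => (condDistrib t (b ∘ Z) μ (b (Z ω))).real {k} := by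
    intro k
    have h_ind :
        (fun ω => if t ω = k then (1 : ℝ) else 0) = (t ⁻¹' {k}).indicator fun _ => 1 := by
      ext ω
      by_cases h : t ω = k <;> simp [h]
    calc (fun ω => π (Z ω) k)
        =ᵐ[μ] μ⟦t ⁻¹' {k} | MeasurableSpace.comap Z inferInstance⟧ := h_ind ▸ hπ_version k
      _ =ᵐ[μ] μ⟦t ⁻¹' {k} | MeasurableSpace.comap (b ∘ Z) inferInstance⟧ :=
        (condExp_indicator_ae_eq_of_condIndep h_comap hZ.comap_le ht.comap_le h_condIndep
          ⟨{k}, measurableSet_singleton k, rfl⟩).symm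
      _ =ᵐ[μ] _ := (condDistrib_ae_eq_condExp (hb.comp hZ) ht (measurableSet_singleton k)).symm
  filter_upwards [ae_all_iff.mpr h_coord] with ω hω
  exact funext hω

/-- If `b(Z)` is a balancing score, i.e. `t ⫫ Z | b(Z)`, then the propensity
score `π(Z)` is a measurable function of `b(Z)` almost surely. -/
theorem propensity_factors_through_balancing_score
    {Ω 𝒵 ℬ : Type*} [MeasurableSpace Ω] [StandardBorelSpace Ω] [Nonempty Ω]
    [MeasurableSpace 𝒵] [MeasurableSpace ℬ]
    (μ : Measure Ω) [IsProbabilityMeasure μ] {T : ℕ}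
    (Z : Ω → 𝒵) (t : Ω → Fin (T + 1)) (π : 𝒵 → Fin (T + 1) → ℝ) (b : 𝒵 → ℬ)
    (hZ : Measurable Z) (ht : Measurable t) (hπ : Measurable π) (hb : Measurable b)
    (hπ_version : ∀ k : Fin (T + 1),
      (fun ω => π (Z ω) k)
        =ᵐ[μ]
      μ[(fun ω => if t ω = k then (1 : ℝ) else 0) | MeasurableSpace.comap Z inferInstance])
    (hbal : CondIndepFun (MeasurableSpace.comap (fun ω => b (Z ω)) inferInstance)
      ((hb.comp hZ).comap_le) t Z μ) :
    ∃ g : ℬ → Fin (T + 1) → ℝ, Measurable g ∧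
      (fun ω => π (Z ω)) =ᵐ[μ] fun ω => g (b (Z ω)) :=
  propensity_factors_through_balancing_score_general μ Z t π b hZ ht hb hπ_version hbal
end

section
/- The propensity score map z ↦ π(z) restricted to its strictly positive part is injective if and only if the map g(z) = (log p(z|t=1) − log p(z|t=0), ..., log p(z|t=T) − log p(z|t=0)) is injective. -/
/-!
Both maps identify `z` and `z'` exactly when the likelihood vectors `(p k z)ₖ` and `(p k z')ₖ`
are proportional: normalising `(p k z * w k)ₖ` forgets precisely a scalar factor, and so does
taking log-likelihood ratios against the reference class `0`.
-/

section Proportional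

variable {ι 𝕜 : Type*} [Field 𝕜]

theorem div_sum_eq_div_sum_iff_exists_smul [Fintype ι] {u v : ι → 𝕜}
    (hu : ∑ i, u i ≠ 0) (hv : ∑ i, v i ≠ 0) :
    (fun k => u k / ∑ i, u i) = (fun k => v k / ∑ i, v i) ↔ ∃ c : 𝕜, u = c • v := by
  constructor
  · intro h
    refine ⟨(∑ i, u i) / ∑ i, v i, funext fun k => ?_⟩
    have hk := congrFun h k
    simp only [Pi.smul_apply, smul_eq_mul]
    field_simp at hk ⊢
    linear_combination hk
  · rintro ⟨c, rfl⟩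
    have hc : c ≠ 0 := by
      rintro rfl
      simp at hu
    funext k
    simp only [Pi.smul_apply, smul_eq_mul, ← Finset.mul_sum]
    exact mul_div_mul_left _ _ hc

theorem exists_smul_mul_right_iff {u v w : ι → 𝕜} (hw : ∀ k, w k ≠ 0) :
    (∃ c : 𝕜, (fun k => u k * w k) = c • fun k => v k * w k) ↔ ∃ c : 𝕜, u = c • v := by
  refine exists_congr fun c => ⟨fun h => funext fun k => ?_, fun h => funext fun k => ?_⟩
  · have hk := congrFun h k
    simp only [Pi.smul_apply, smul_eq_mul, ← mul_assoc] at hk ⊢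
    exact mul_right_cancel₀ (hw k) hk
  · simp [h, mul_assoc]

theorem exists_smul_iff_forall_div_eq {u v : ι → 𝕜} (j : ι) (hu : u j ≠ 0) (hv : v j ≠ 0) :
    (∃ c : 𝕜, u = c • v) ↔ ∀ i, u i / u j = v i / v j := by
  constructor
  · rintro ⟨c, rfl⟩ i
    have hc : c ≠ 0 := left_ne_zero_of_mul hu
    simp only [Pi.smul_apply, smul_eq_mul]
    exact mul_div_mul_left _ _ hc
  · intro h
    refine ⟨u j / v j, funext fun i => ?_⟩
    have hi := h i
    simp only [Pi.smul_apply, smul_eq_mul]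
    field_simp at hi ⊢
    linear_combination hi

end Proportional

theorem Real.log_sub_log_eq_log_sub_log_iff {x y x' y' : ℝ}
    (hx : 0 < x) (hy : 0 < y) (hx' : 0 < x') (hy' : 0 < y') :
    Real.log x - Real.log y = Real.log x' - Real.log y' ↔ x / y = x' / y' := by
  rw [← Real.log_div hx.ne' hy.ne', ← Real.log_div hx'.ne' hy'.ne']
  exact Real.log_injOn_pos.eq_iff (div_pos hx hy) (div_pos hx' hy')

theorem log_ratio_eq_log_ratio_iff_exists_smul {n : ℕ} {u v : Fin (n + 1) → ℝ}
    (hu : ∀ k, 0 < u k) (hv : ∀ k, 0 < v k) :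
    (fun i : Fin n => Real.log (u i.succ) - Real.log (u 0)) =
        (fun i : Fin n => Real.log (v i.succ) - Real.log (v 0)) ↔
      ∃ c : ℝ, u = c • v := by
  rw [exists_smul_iff_forall_div_eq 0 (hu 0).ne' (hv 0).ne', Fin.forall_fin_succ, funext_iff,
    div_self (hu 0).ne', div_self (hv 0).ne', eq_self_iff_true, true_and]
  exact forall_congr' fun i =>
    Real.log_sub_log_eq_log_sub_log_iff (hu i.succ) (hu 0) (hv i.succ) (hv 0)

/-- With strictly positive class-conditional densities `p(z|t)` and strictly
positive priors, the propensity score map `π` (which is strictly positive) is injective if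
and only if the log-likelihood-ratio map
`g(z) = (log p(z|t=k) − log p(z|t=0))_{k=1}^T` is injective. -/
theorem propensity_injective_iff_log_ratio_injective
    {𝒵 : Type*} {T : ℕ}
    (p : Fin (T + 1) → 𝒵 → ℝ) (w : Fin (T + 1) → ℝ)
    (hp_pos : ∀ k z, 0 < p k z) (hw_pos : ∀ k, 0 < w k)
    (π : 𝒵 → Fin (T + 1) → ℝ)
    (hπ : π = fun z k => p k z * w k / ∑ i, p i z * w i)
    (g : 𝒵 → Fin T → ℝ)
    (hg : g = fun z i => Real.log (p i.succ z) - Real.log (p 0 z)) :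
    Function.Injective π ↔ Function.Injective g := by
  subst hπ hg
  have hsum : ∀ z, ∑ i, p i z * w i ≠ 0 := fun z =>
    (Finset.sum_pos (fun i _ => mul_pos (hp_pos i z) (hw_pos i)) Finset.univ_nonempty).ne'
  have hfiber : ∀ z z',
      (fun k => p k z * w k / ∑ i, p i z * w i) = (fun k => p k z' * w k / ∑ i, p i z' * w i) ↔
        (fun i : Fin T => Real.log (p i.succ z) - Real.log (p 0 z)) =
          (fun i : Fin T => Real.log (p i.succ z') - Real.log (p 0 z')) := fun z z' =>
    (div_sum_eq_div_sum_iff_exists_smul (hsum z) (hsum z')).trans <|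
      (exists_smul_mul_right_iff fun k => (hw_pos k).ne').trans
        (log_ratio_eq_log_ratio_iff_exists_smul (fun k => hp_pos k z) fun k => hp_pos k z').symm
  exact forall₂_congr fun z z' => imp_congr_left (hfiber z z')
end

section
/- Any solution M of the discrete Kantorovich optimal transport problem with cost c has support {(i,j) : M_{ij} > 0} that is c-cyclically monotone: for any finite sequence of pairs (x_1,y_1),...,(x_N,y_N) in the support, Σ_n c(x_n, y_n) ≤ Σ_n c(x_n, y_{n+1}) with y_{N+1} := y_1. -/
/-!
Pushing mass `ε` around the cycle, i.e. removing `ε` from each `(x_n, y_n)` and adding it to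
each `(x_n, y_{n+1})`, preserves both marginals, and keeps the plan nonnegative for small `ε`
because every `(x_n, y_n)` carries positive mass. Optimality then forces the cost change
`ε (∑ c(x_n, y_{n+1}) - ∑ c(x_n, y_n))` to be nonnegative. Nothing in this uses that the
rematching is a cyclic shift: any permutation of the targets works.
-/

open Finset Filter Topology

section Kantorovich

variable {α β : Type*} [Fintype α] [Fintype β]

def transportCost (C M : α → β → ℝ) : ℝ := ∑ i, ∑ j, C i j * M i j

def IsCoupling (p₁ : α → ℝ) (p₂ : β → ℝ) (M : α → β → ℝ) : Prop :=
  (∀ i j, 0 ≤ M i j) ∧ (∀ i, ∑ j, M i j = p₁ i) ∧ (∀ j, ∑ i, M i j = p₂ j)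

lemma transportCost_add_smul (C M D : α → β → ℝ) (ε : ℝ) :
    transportCost C (M + ε • D) = transportCost C M + ε * transportCost C D := by
  simp only [transportCost, Pi.add_apply, Pi.smul_apply, smul_eq_mul, mul_add, sum_add_distrib,
    mul_sum]
  congr 1
  exact sum_congr rfl fun i _ => sum_congr rfl fun j _ => by ring

lemma transportCost_sub (C A B : α → β → ℝ) :
    transportCost C (A - B) = transportCost C A - transportCost C B := by
  simp only [transportCost, Pi.sub_apply, mul_sub, sum_sub_distrib]

lemma IsCoupling.add_smul {p₁ : α → ℝ} {p₂ : β → ℝ} {M D : α → β → ℝ} {ε : ℝ}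
    (hM : IsCoupling p₁ p₂ M) (hrows : ∀ i, ∑ j, D i j = 0) (hcols : ∀ j, ∑ i, D i j = 0)
    (hnn : ∀ i j, 0 ≤ M i j + ε * D i j) : IsCoupling p₁ p₂ (M + ε • D) := by
  refine ⟨hnn, fun i => ?_, fun j => ?_⟩
  · simp [sum_add_distrib, ← mul_sum, hrows, hM.2.1]
  · simp [sum_add_distrib, ← mul_sum, hcols, hM.2.2]

lemma exists_pos_forall_add_mul_nonneg {M D : α → β → ℝ} (hM : ∀ i j, 0 ≤ M i j)
    (hD : ∀ i j, D i j < 0 → 0 < M i j) : ∃ ε > 0, ∀ i j, 0 ≤ M i j + ε * D i j := by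
  have hsmall : ∀ i j, ∀ᶠ ε in 𝓝[>] (0 : ℝ), 0 ≤ M i j + ε * D i j := by
    intro i j
    rcases le_or_gt 0 (D i j) with hDij | hDij
    · filter_upwards [self_mem_nhdsWithin] with ε hε
      exact add_nonneg (hM i j) (mul_nonneg hε.le hDij)
    · have hlim : Tendsto (fun ε => M i j + ε * D i j) (𝓝[>] 0) (𝓝 (M i j)) := by
        have hcont : Continuous fun ε : ℝ => M i j + ε * D i j := by fun_prop
        simpa using (hcont.tendsto 0).mono_left nhdsWithin_le_nhds
      exact (hlim.eventually (eventually_gt_nhds (hD i j hDij))).mono fun _ => le_of_lt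
  exact ((eventually_all.2 fun i => eventually_all.2 (hsmall i)).and
    self_mem_nhdsWithin).exists.imp fun _ h => ⟨h.2, h.1⟩

lemma transportCost_nonneg_of_isOptimal {p₁ : α → ℝ} {p₂ : β → ℝ} {C M D : α → β → ℝ}
    (hM : IsCoupling p₁ p₂ M)
    (hopt : ∀ M', IsCoupling p₁ p₂ M' → transportCost C M ≤ transportCost C M')
    (hrows : ∀ i, ∑ j, D i j = 0) (hcols : ∀ j, ∑ i, D i j = 0)
    (hsupp : ∀ i j, D i j < 0 → 0 < M i j) : 0 ≤ transportCost C D := by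
  obtain ⟨ε, hε, hnn⟩ := exists_pos_forall_add_mul_nonneg hM.1 hsupp
  have hle := hopt _ (hM.add_smul hrows hcols hnn)
  rw [transportCost_add_smul] at hle
  exact nonneg_of_mul_nonneg_right (by linarith) hε

end Kantorovich

section PairCount

variable {α β ι : Type*} [Fintype ι] [DecidableEq α] [DecidableEq β]

/-- Counted with multiplicity, since the pairs `P m` need not be distinct. -/
def pairCount (P : ι → α × β) (i : α) (j : β) : ℝ := ∑ m, if P m = (i, j) then 1 else 0

lemma pairCount_nonneg (P : ι → α × β) (i : α) (j : β) : 0 ≤ pairCount P i j :=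
  sum_nonneg fun _ _ => by split_ifs <;> norm_num

lemma exists_eq_of_pairCount_pos {P : ι → α × β} {i : α} {j : β} (h : 0 < pairCount P i j) :
    ∃ m, P m = (i, j) := by
  obtain ⟨m, -, hm⟩ := exists_ne_zero_of_sum_ne_zero h.ne'
  exact ⟨m, by_contra fun hne => hm (if_neg hne)⟩

lemma sum_pairCount_right [Fintype β] (P : ι → α × β) (i : α) :
    ∑ j, pairCount P i j = ∑ m, if (P m).1 = i then 1 else 0 := by
  simp only [pairCount]
  rw [sum_comm]
  exact sum_congr rfl fun m _ => by simp [Prod.ext_iff, ite_and, eq_comm]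

lemma sum_pairCount_left [Fintype α] (P : ι → α × β) (j : β) :
    ∑ i, pairCount P i j = ∑ m, if (P m).2 = j then 1 else 0 := by
  simp only [pairCount]
  rw [sum_comm]
  exact sum_congr rfl fun m _ => by simp [Prod.ext_iff, ite_and, eq_comm]

variable [Fintype α] [Fintype β]

lemma transportCost_pairCount (C : α → β → ℝ) (P : ι → α × β) :
    transportCost C (pairCount P) = ∑ m, C (P m).1 (P m).2 := by
  simp only [transportCost, pairCount, mul_sum, mul_ite, mul_one, mul_zero]
  rw [← Fintype.sum_prod_type', sum_comm]
  simp

theorem sum_cost_le_sum_cost_perm_of_isOptimal {p₁ : α → ℝ} {p₂ : β → ℝ} {C M : α → β → ℝ}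
    (hM : IsCoupling p₁ p₂ M)
    (hopt : ∀ M', IsCoupling p₁ p₂ M' → transportCost C M ≤ transportCost C M')
    (P : ι → α × β) (hP : ∀ m, 0 < M (P m).1 (P m).2) (σ : Equiv.Perm ι) :
    ∑ m, C (P m).1 (P m).2 ≤ ∑ m, C (P m).1 (P (σ m)).2 := by
  set Q : ι → α × β := fun m => ((P m).1, (P (σ m)).2)
  have hrows : ∀ i, ∑ j, (pairCount Q - pairCount P) i j = 0 := fun i => by
    simp [sum_sub_distrib, sum_pairCount_right, Q]
  have hcols : ∀ j, ∑ i, (pairCount Q - pairCount P) i j = 0 := fun j => by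
    simp only [Pi.sub_apply, sum_sub_distrib, sum_pairCount_left, Q]
    exact sub_eq_zero.2 (Equiv.sum_comp σ fun m => if (P m).2 = j then (1 : ℝ) else 0)
  have hsupp : ∀ i j, (pairCount Q - pairCount P) i j < 0 → 0 < M i j := fun i j h => by
    have hpos : 0 < pairCount P i j := by
      simp only [Pi.sub_apply] at h
      linarith [pairCount_nonneg Q i j]
    obtain ⟨m, hm⟩ := exists_eq_of_pairCount_pos hpos
    simpa only [hm] using hP m
  have hcost := transportCost_nonneg_of_isOptimal hM hopt hrows hcols hsupp
  rw [transportCost_sub, transportCost_pairCount, transportCost_pairCount] at hcost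
  linarith

end PairCount

/-- Any solution of the discrete Kantorovich problem has `c`-cyclically
monotone support: for any finite cycle of pairs in the support, cyclically shifting the
targets does not decrease the total cost. -/
theorem optimal_plan_support_cyclically_monotone
    {X Y : Type*} {n₁ n₂ : ℕ}
    (c : X → Y → ℝ) (x : Fin n₁ → X) (y : Fin n₂ → Y)
    (p₁ : Fin n₁ → ℝ) (p₂ : Fin n₂ → ℝ)
    (M : Fin n₁ → Fin n₂ → ℝ)
    (hM_nonneg : ∀ i j, 0 ≤ M i j)
    (hM_rows : ∀ i, ∑ j, M i j = p₁ i)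
    (hM_cols : ∀ j, ∑ i, M i j = p₂ j)
    (hM_opt : ∀ M' : Fin n₁ → Fin n₂ → ℝ,
      (∀ i j, 0 ≤ M' i j) → (∀ i, ∑ j, M' i j = p₁ i) → (∀ j, ∑ i, M' i j = p₂ j) →
      ∑ i, ∑ j, c (x i) (y j) * M i j ≤ ∑ i, ∑ j, c (x i) (y j) * M' i j) :
    ∀ N : ℕ, ∀ I : Fin (N + 1) → Fin n₁ × Fin n₂,
      (∀ m, 0 < M (I m).1 (I m).2) →
      ∑ m : Fin (N + 1), c (x (I m).1) (y (I m).2) ≤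
        ∑ m : Fin (N + 1), c (x (I m).1) (y (I (m + 1)).2) := by
  intro N I hI
  exact sum_cost_le_sum_cost_perm_of_isOptimal (C := fun i j => c (x i) (y j))
    ⟨hM_nonneg, hM_rows, hM_cols⟩ (fun M' hM' => hM_opt M' hM'.1 hM'.2.1 hM'.2.2)
    I hI (Equiv.addRight 1)
end
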